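/- Let σ ∈ (0,1). For every multi-index β ∈ ℕ^d with |β| ≥ 1 there is a constant C, depending only on d, σ, β, such that for all ξ, η ∈ ℝ^d, | ∂_ξ^β ( ⟨ξ+η⟩^σ − ⟨ξ⟩^σ ) | ≤ C · ⟨ξ⟩^{−|β|} · ⟨η⟩^{2|β|}. -/

import Mathlib

open MeasureTheory Real
open scoped FourierTransform ENNReal

noncomputable section

/-- `ℝ^d` as a Euclidean space. -/
abbrev E (d : ℕ) := EuclideanSpace ℝ (Fin d)

/-- The Japanese bracket `⟨ξ⟩ = (1 + |ξ|²)^{1/2}`. -/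
def jap {d : ℕ} (ξ : E d) : ℝ := Real.sqrt (1 + ‖ξ‖ ^ 2)

/-- Partial derivative in the `i`-th coordinate direction. -/
def pder {d : ℕ} {F : Type*} [NormedAddCommGroup F] [NormedSpace ℝ F]
    (i : Fin d) (f : E d → F) : E d → F :=
  fun x => fderiv ℝ f x (EuclideanSpace.single i 1)

/-- Multi-index partial derivative `∂^α`. -/
def mpder {d : ℕ} {F : Type*} [NormedAddCommGroup F] [NormedSpace ℝ F]
    (α : Fin d → ℕ) (f : E d → F) : E d → F :=
  (List.finRange d).foldr (fun i g => (pder i)^[α i] g) f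

/-!
The function `⟨ξ⟩^σ` belongs to the class of linear combinations of `ξ^α ⟨ξ⟩^r` with
`|α| + r ≤ s`, whose members are bounded by `C ⟨ξ⟩^s` and which `∂_i` maps into the same class
with `s` lowered by one. Hence `G = ∂^β ⟨·⟩^σ` and its gradient are bounded by `C ⟨ξ⟩^{σ-|β|}`
and `C ⟨ξ⟩^{σ-|β|-1}`. As `∂^β` commutes with translations, the quantity to estimate is
`G (ξ + η) - G ξ`. If `⟨ξ⟩ ≤ ⟨η⟩`, both terms are bounded separately, using Peetre's inequality
`⟨ξ + η⟩^s ≤ 2^{-s} ⟨ξ⟩^s ⟨η⟩^{-s}` (`s ≤ 0`) for the first; if `⟨η⟩ ≤ ⟨ξ⟩`, the mean value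
theorem on the segment from `ξ` to `ξ + η` applies, Peetre's inequality controlling the gradient
along it.
-/
section Bracket

variable {d : ℕ}

lemma one_le_jap (ξ : E d) : 1 ≤ jap ξ :=
  Real.one_le_sqrt.mpr (by simp)

lemma jap_pos (ξ : E d) : 0 < jap ξ :=
  one_pos.trans_le (one_le_jap ξ)

lemma norm_le_jap (ξ : E d) : ‖ξ‖ ≤ jap ξ :=
  (Real.le_sqrt (norm_nonneg ξ) (by positivity)).mpr (by simp)

lemma jap_le_jap {ξ η : E d} (h : ‖ξ‖ ≤ ‖η‖) : jap ξ ≤ jap η :=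
  Real.sqrt_le_sqrt (by gcongr)

lemma jap_neg (ξ : E d) : jap (-ξ) = jap ξ := by
  rw [jap, jap, norm_neg]

lemma jap_add_le (ξ η : E d) : jap (ξ + η) ≤ √2 * jap ξ * jap η := by
  rw [jap, jap, jap, ← Real.sqrt_mul zero_le_two, ← Real.sqrt_mul (by positivity)]
  refine Real.sqrt_le_sqrt ?_
  have := norm_add_le ξ η
  nlinarith [norm_nonneg (ξ + η), sq_nonneg (‖ξ‖ - ‖η‖), sq_nonneg (‖ξ‖ * ‖η‖)]

lemma rpow_jap_add_le {s : ℝ} (hs : s ≤ 0) (ξ η : E d) :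
    jap (ξ + η) ^ s ≤ 2 ^ (-s) * jap ξ ^ s * jap η ^ (-s) := by
  have hξ : jap ξ ≤ 2 * jap η * jap (ξ + η) :=
    calc jap ξ = jap (ξ + η + -η) := by rw [add_neg_cancel_right]
      _ ≤ √2 * jap (ξ + η) * jap η := by simpa only [jap_neg] using jap_add_le (ξ + η) (-η)
      _ ≤ 2 * jap η * jap (ξ + η) := by
          have : √2 ≤ 2 := Real.sqrt_le_iff.mpr ⟨zero_le_two, by norm_num⟩
          nlinarith [mul_pos (jap_pos η) (jap_pos (ξ + η))]
  have := jap_pos ξ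
  have h2η : 0 < 2 * jap η := mul_pos two_pos (jap_pos η)
  calc jap (ξ + η) ^ s ≤ (jap ξ / (2 * jap η)) ^ s :=
        Real.rpow_le_rpow_of_nonpos (by positivity) ((div_le_iff₀' h2η).mpr hξ) hs
    _ = 2 ^ (-s) * jap ξ ^ s * jap η ^ (-s) := by
        rw [Real.div_rpow (jap_pos ξ).le h2η.le, Real.mul_rpow zero_le_two (jap_pos η).le,
          Real.rpow_neg zero_le_two, Real.rpow_neg (jap_pos η).le]
        field_simp

lemma jap_rpow_eq (r : ℝ) (ξ : E d) : jap ξ ^ r = (1 + ‖ξ‖ ^ 2) ^ (r / 2) := by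
  rw [jap, Real.sqrt_eq_rpow, ← Real.rpow_mul (by positivity)]
  ring_nf

lemma hasFDerivAt_jap_rpow (r : ℝ) (x : E d) :
    HasFDerivAt (fun ξ : E d => jap ξ ^ r) ((r * jap x ^ (r - 2)) • innerSL ℝ x) x := by
  have h := (((hasFDerivAt_id x).norm_sq).const_add 1).rpow_const (p := r / 2)
    (Or.inl (by positivity))
  rw [funext (jap_rpow_eq r)]
  refine h.congr_fderiv ?_
  ext v
  simp only [id, jap_rpow_eq, show (r - 2) / 2 = r / 2 - 1 by ring, ContinuousLinearMap.comp_id,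
    FunLike.coe_smul, Pi.smul_apply, smul_eq_mul, two_smul, add_apply]
  ring

end Bracket

section PartialDerivatives

variable {d : ℕ} {F : Type*} [NormedAddCommGroup F] [NormedSpace ℝ F]

lemma HasFDerivAt.pder_eq {f : E d → F} {f' : E d →L[ℝ] F} {x : E d} (h : HasFDerivAt f f' x)
    (i : Fin d) : pder i f x = f' (EuclideanSpace.single i 1) := by
  rw [pder, h.fderiv]

lemma pder_add (i : Fin d) {f g : E d → F} (hf : Differentiable ℝ f) (hg : Differentiable ℝ g) :
    pder i (fun ξ => f ξ + g ξ) = fun ξ => pder i f ξ + pder i g ξ :=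
  funext fun x => ((hf x).hasFDerivAt.add (hg x).hasFDerivAt).pder_eq i

lemma pder_const_mul (i : Fin d) (c : ℝ) {f : E d → ℝ} (hf : Differentiable ℝ f) :
    pder i (fun ξ => c * f ξ) = fun ξ => c * pder i f ξ :=
  funext fun x => ((hf x).hasFDerivAt.const_mul c).pder_eq i

lemma pder_translate_sub (i : Fin d) (η : E d) {f : E d → F} (hf : Differentiable ℝ f) :
    pder i (fun ξ => f (ξ + η) - f ξ) = fun ξ => pder i f (ξ + η) - pder i f ξ := by
  funext x
  have hη : HasFDerivAt (fun ξ => f (ξ + η)) (fderiv ℝ f (x + η)) x :=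
    (hasFDerivAt_comp_add_right η).mpr (hf (x + η)).hasFDerivAt
  exact (hη.sub (hf x).hasFDerivAt).pder_eq i

lemma pder_coord_mul (i j : Fin d) {f : E d → ℝ} (hf : Differentiable ℝ f) :
    pder i (fun ξ => ξ j * f ξ)
      = fun ξ => ξ j * pder i f ξ + (EuclideanSpace.single i 1 : E d) j * f ξ := by
  funext x
  have h := ((EuclideanSpace.proj j).hasFDerivAt (x := x)).mul (hf x).hasFDerivAt
  refine (h.pder_eq i).trans ?_
  simp only [add_apply, FunLike.coe_smul, Pi.smul_apply, smul_eq_mul, PiLp.proj_apply, pder]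
  ring

lemma pder_jap_rpow (i : Fin d) (r : ℝ) :
    pder i (fun ξ : E d => jap ξ ^ r) = fun ξ => ξ i * (r * jap ξ ^ (r - 2)) := by
  funext x
  rw [(hasFDerivAt_jap_rpow r x).pder_eq i]
  simp [EuclideanSpace.inner_single_right]
  ring

lemma norm_fderiv_le_sum_norm_pder (f : E d → F) (x : E d) :
    ‖fderiv ℝ f x‖ ≤ ∑ i, ‖pder i f x‖ := by
  refine ContinuousLinearMap.opNorm_le_bound _ (by positivity) fun v => ?_
  have hv : ∑ i, v i • (EuclideanSpace.single i 1 : E d) = v := by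
    simpa using (EuclideanSpace.basisFun (Fin d) ℝ).sum_repr v
  calc ‖fderiv ℝ f x v‖ = ‖∑ i, v i • pder i f x‖ := by
        conv_lhs => rw [← hv, map_sum]
        simp only [map_smul, pder]
    _ ≤ ∑ i, ‖v‖ * ‖pder i f x‖ := by
        refine (norm_sum_le _ _).trans (Finset.sum_le_sum fun i _ => ?_)
        rw [norm_smul]
        gcongr
        exact PiLp.norm_apply_le v i
    _ = (∑ i, ‖pder i f x‖) * ‖v‖ := by rw [← Finset.mul_sum, mul_comm]

lemma iterate_pder_induction {P : ℕ → (E d → F) → Prop}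
    (hP : ∀ i n f, P n f → P (n + 1) (pder i f)) (i : Fin d) (k : ℕ) {n : ℕ} {f : E d → F}
    (hf : P n f) : P (n + k) ((pder i)^[k] f) := by
  induction k with
  | zero => exact hf
  | succ k ih => rw [Function.iterate_succ_apply']; exact hP i _ _ ih

lemma mpder_induction {P : ℕ → (E d → F) → Prop}
    (hP : ∀ i n f, P n f → P (n + 1) (pder i f)) (β : Fin d → ℕ) {n : ℕ} {f : E d → F}
    (hf : P n f) : P (n + ∑ i, β i) (mpder β f) := by
  suffices ∀ l : List (Fin d),
      P (n + (l.map β).sum) (l.foldr (fun i g => (pder i)^[β i] g) f) by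
    simpa [Fin.sum_univ_def, mpder] using this (List.finRange d)
  intro l
  induction l with
  | nil => simpa using hf
  | cons i l ih =>
      rw [List.map_cons, List.sum_cons, add_left_comm, add_comm]
      exact iterate_pder_induction hP i (β i) ih

lemma mpder_comm {S : Set (E d → F)} {T : (E d → F) → (E d → F)}
    (hS : ∀ i, ∀ f ∈ S, pder i f ∈ S) (hT : ∀ i, ∀ f ∈ S, pder i (T f) = T (pder i f))
    (β : Fin d → ℕ) {f : E d → F} (hf : f ∈ S) : mpder β (T f) = T (mpder β f) := by
  have hiter : ∀ i k, ∀ g ∈ S, (pder i)^[k] g ∈ S ∧ (pder i)^[k] (T g) = T ((pder i)^[k] g) := by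
    intro i k
    induction k with
    | zero => exact fun g hg => ⟨hg, rfl⟩
    | succ k ih =>
        intro g hg
        obtain ⟨hgS, hgT⟩ := ih g hg
        rw [Function.iterate_succ_apply', Function.iterate_succ_apply', hgT]
        exact ⟨hS i _ hgS, hT i _ hgS⟩
  have hfold : ∀ l : List (Fin d), let D := l.foldr fun i g => (pder i)^[β i] g
      D f ∈ S ∧ D (T f) = T (D f) := by
    intro l
    induction l with
    | nil => exact ⟨hf, rfl⟩
    | cons i l ih =>
        obtain ⟨hlS, hlT⟩ := ih
        dsimp only at hlS hlT ⊢
        rw [List.foldr_cons, List.foldr_cons, hlT]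
        exact hiter i (β i) _ hlS
  exact (hfold _).2

end PartialDerivatives

/-- `IsBracketSymbol s f`: `f` is a linear combination of terms `ξ^α ⟨ξ⟩^r` with `|α| + r ≤ s`. -/
inductive IsBracketSymbol {d : ℕ} : ℝ → (E d → ℝ) → Prop
  | rpow {r s : ℝ} (h : r ≤ s) : IsBracketSymbol s fun ξ => jap ξ ^ r
  | coord_mul (i : Fin d) {s : ℝ} {f : E d → ℝ} :
      IsBracketSymbol (s - 1) f → IsBracketSymbol s fun ξ => ξ i * f ξ
  | const_mul (c : ℝ) {s : ℝ} {f : E d → ℝ} :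
      IsBracketSymbol s f → IsBracketSymbol s fun ξ => c * f ξ
  | add {s : ℝ} {f g : E d → ℝ} :
      IsBracketSymbol s f → IsBracketSymbol s g → IsBracketSymbol s fun ξ => f ξ + g ξ

namespace IsBracketSymbol

variable {d : ℕ} {s : ℝ} {f : E d → ℝ}

lemma differentiable (h : IsBracketSymbol s f) : Differentiable ℝ f := by
  induction h with
  | rpow => exact fun x => (hasFDerivAt_jap_rpow _ x).differentiableAt
  | coord_mul i _ ih => exact (EuclideanSpace.proj i).differentiable.mul ih
  | const_mul c _ ih => exact ih.const_mul c
  | add _ _ ihf ihg => exact ihf.add ihg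

lemma pder (h : IsBracketSymbol s f) (i : Fin d) : IsBracketSymbol (s - 1) (pder i f) := by
  induction h with
  | @rpow r s hrs =>
      rw [pder_jap_rpow]
      exact coord_mul i (const_mul r (rpow (by linarith)))
  | coord_mul j hf ih =>
      rw [pder_coord_mul i j hf.differentiable]
      exact add (coord_mul j ih) (const_mul _ hf)
  | const_mul c hf ih =>
      rw [pder_const_mul i c hf.differentiable]
      exact const_mul c ih
  | add hf hg ihf ihg =>
      rw [pder_add i hf.differentiable hg.differentiable]
      exact add ihf ihg

lemma mpder (h : IsBracketSymbol s f) (β : Fin d → ℕ) :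
    IsBracketSymbol (s - ∑ i, (β i : ℝ)) (mpder β f) := by
  have := mpder_induction (P := fun n g => IsBracketSymbol (s - n) g)
    (fun i n g hg => by simpa [sub_sub] using hg.pder i) β (n := 0) (by simpa using h)
  simpa using this

lemma exists_bound (h : IsBracketSymbol s f) :
    ∃ C, 0 < C ∧ ∀ ξ, |f ξ| ≤ C * jap ξ ^ s := by
  induction h with
  | @rpow r s hrs =>
      refine ⟨1, one_pos, fun ξ => ?_⟩
      rw [one_mul, abs_of_pos (Real.rpow_pos_of_pos (jap_pos ξ) r)]
      exact Real.rpow_le_rpow_of_exponent_le (one_le_jap ξ) hrs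
  | @coord_mul i s f _ ih =>
      obtain ⟨C, hC, hf⟩ := ih
      refine ⟨C, hC, fun ξ => ?_⟩
      have hi : |ξ i| ≤ jap ξ := (PiLp.norm_apply_le ξ i).trans (norm_le_jap ξ)
      calc |ξ i * f ξ| = |ξ i| * |f ξ| := abs_mul _ _
        _ ≤ jap ξ * (C * jap ξ ^ (s - 1)) := by gcongr; exacts [(jap_pos ξ).le, hf ξ]
        _ = C * jap ξ ^ s := by
            rw [Real.rpow_sub_one (jap_pos ξ).ne']
            field_simp [(jap_pos ξ).ne']
  | @const_mul c s f _ ih =>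
      obtain ⟨C, hC, hf⟩ := ih
      refine ⟨(|c| + 1) * C, by positivity, fun ξ => ?_⟩
      rw [abs_mul, mul_assoc]
      gcongr
      exacts [le_add_of_nonneg_right zero_le_one, hf ξ]
  | add _ _ ihf ihg =>
      obtain ⟨C₁, hC₁, hf⟩ := ihf
      obtain ⟨C₂, hC₂, hg⟩ := ihg
      refine ⟨C₁ + C₂, by positivity, fun ξ => ?_⟩
      rw [add_mul]
      exact (abs_add_le _ _).trans (add_le_add (hf ξ) (hg ξ))

lemma exists_norm_fderiv_bound (h : IsBracketSymbol s f) :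
    ∃ D, 0 ≤ D ∧ ∀ ξ, ‖fderiv ℝ f ξ‖ ≤ D * jap ξ ^ (s - 1) := by
  choose C hC hbound using fun i => (h.pder i).exists_bound
  refine ⟨∑ i, C i, Finset.sum_nonneg fun i _ => (hC i).le, fun ξ => ?_⟩
  rw [Finset.sum_mul]
  exact (norm_fderiv_le_sum_norm_pder f ξ).trans (Finset.sum_le_sum fun i _ => hbound i ξ)

end IsBracketSymbol

section DifferenceEstimate

variable {d : ℕ} {G : E d → ℝ} {σ m C D : ℝ}

lemma abs_sub_le_of_jap_le (hσ0 : 0 ≤ σ) (hσm : σ ≤ m) (hC : 0 ≤ C)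
    (hG : ∀ x, |G x| ≤ C * jap x ^ (σ - m)) {ξ η : E d} (hξη : jap ξ ≤ jap η) :
    |G (ξ + η) - G ξ| ≤ C * (2 ^ (m + 1) * jap ξ ^ (-m) * jap η ^ m) := by
  have ha := jap_pos ξ
  have hb := jap_pos η
  have hsplit : jap ξ ^ (σ - m) ≤ jap ξ ^ (-m) * jap η ^ σ := by
    rw [show σ - m = -m + σ by ring, Real.rpow_add ha]
    gcongr
  have hshift : |G (ξ + η)| ≤ C * (2 ^ m * jap ξ ^ (-m) * jap η ^ m) :=
    calc |G (ξ + η)| ≤ C * jap (ξ + η) ^ (σ - m) := hG _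
      _ ≤ C * (2 ^ (-(σ - m)) * jap ξ ^ (σ - m) * jap η ^ (-(σ - m))) := by
          gcongr
          exact rpow_jap_add_le (by linarith) ξ η
      _ ≤ C * (2 ^ m * (jap ξ ^ (-m) * jap η ^ σ) * jap η ^ (-(σ - m))) := by
          gcongr ?_ * (?_ * ?_ * _)
          exact Real.rpow_le_rpow_of_exponent_le one_le_two (by linarith)
      _ = C * (2 ^ m * jap ξ ^ (-m) * jap η ^ m) := by
          have hexp : jap η ^ σ * jap η ^ (-(σ - m)) = jap η ^ m := by
            rw [← Real.rpow_add hb]; congr 1; ring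
          linear_combination C * 2 ^ m * jap ξ ^ (-m) * hexp
  have hbase : |G ξ| ≤ C * (2 ^ m * jap ξ ^ (-m) * jap η ^ m) :=
    calc |G ξ| ≤ C * (1 * jap ξ ^ (-m) * jap η ^ σ) := by
          rw [one_mul]; exact (hG ξ).trans (by gcongr)
      _ ≤ C * (2 ^ m * jap ξ ^ (-m) * jap η ^ m) := by
          gcongr
          · exact Real.one_le_rpow one_le_two (by linarith)
          · exact one_le_jap η
  calc |G (ξ + η) - G ξ| ≤ |G (ξ + η)| + |G ξ| := abs_sub _ _
    _ ≤ C * (2 ^ m * jap ξ ^ (-m) * jap η ^ m) + C * (2 ^ m * jap ξ ^ (-m) * jap η ^ m) :=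
        add_le_add hshift hbase
    _ = C * (2 ^ (m + 1) * jap ξ ^ (-m) * jap η ^ m) := by
        rw [Real.rpow_add_one two_ne_zero]
        ring

lemma abs_sub_le_of_jap_ge (hσ0 : 0 ≤ σ) (hσ1 : σ ≤ 1) (hσm : σ ≤ m) (hD : 0 ≤ D)
    (hGd : Differentiable ℝ G)
    (hG : ∀ x, ‖fderiv ℝ G x‖ ≤ D * jap x ^ (σ - m - 1)) {ξ η : E d} (hηξ : jap η ≤ jap ξ) :
    |G (ξ + η) - G ξ| ≤ D * (2 ^ (m + 1) * jap ξ ^ (-m) * jap η ^ (m + 1)) := by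
  have ha := jap_pos ξ
  have hb := jap_pos η
  have hsplit : jap ξ ^ (σ - m - 1) ≤ jap ξ ^ (-m) * jap η ^ (σ - 1) := by
    rw [show σ - m - 1 = -m + (σ - 1) by ring, Real.rpow_add ha]
    exact mul_le_mul_of_nonneg_left (Real.rpow_le_rpow_of_nonpos hb hηξ (by linarith))
      (by positivity)
  have hbound : ∀ x ∈ segment ℝ ξ (ξ + η),
      ‖fderiv ℝ G x‖ ≤ D * (2 ^ (m + 1) * jap ξ ^ (-m) * jap η ^ m) := by
    rintro _ ⟨s, t, hs, ht, hst, rfl⟩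
    have hx : s • ξ + t • (ξ + η) = ξ + t • η := by
      rw [smul_add, ← add_assoc, ← add_smul, hst, one_smul]
    have htη : jap (t • η) ≤ jap η := jap_le_jap <| by
      rw [norm_smul, Real.norm_eq_abs, abs_of_nonneg ht]
      exact mul_le_of_le_one_left (norm_nonneg η) (by linarith)
    rw [hx]
    calc ‖fderiv ℝ G (ξ + t • η)‖ ≤ D * jap (ξ + t • η) ^ (σ - m - 1) := hG _
      _ ≤ D * (2 ^ (-(σ - m - 1)) * jap ξ ^ (σ - m - 1) * jap (t • η) ^ (-(σ - m - 1))) := by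
          gcongr
          exact rpow_jap_add_le (by linarith) ξ (t • η)
      _ ≤ D * (2 ^ (m + 1) * (jap ξ ^ (-m) * jap η ^ (σ - 1)) * jap η ^ (-(σ - m - 1))) := by
          have := jap_pos (t • η)
          gcongr ?_ * (?_ * ?_ * ?_)
          · exact Real.rpow_le_rpow_of_exponent_le one_le_two (by linarith)
          · exact Real.rpow_le_rpow this.le htη (by linarith)
      _ = D * (2 ^ (m + 1) * jap ξ ^ (-m) * jap η ^ m) := by
          have hexp : jap η ^ (σ - 1) * jap η ^ (-(σ - m - 1)) = jap η ^ m := by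
            rw [← Real.rpow_add hb]; congr 1; ring
          linear_combination D * 2 ^ (m + 1) * jap ξ ^ (-m) * hexp
  calc |G (ξ + η) - G ξ| = ‖G (ξ + η) - G ξ‖ := (Real.norm_eq_abs _).symm
    _ ≤ D * (2 ^ (m + 1) * jap ξ ^ (-m) * jap η ^ m) * ‖ξ + η - ξ‖ :=
        (convex_segment _ _).norm_image_sub_le_of_norm_fderiv_le (fun x _ => hGd x) hbound
          (left_mem_segment ℝ _ _) (right_mem_segment ℝ _ _)
    _ ≤ D * (2 ^ (m + 1) * jap ξ ^ (-m) * jap η ^ m) * jap η := by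
        rw [add_sub_cancel_left]
        gcongr
        exact norm_le_jap η
    _ = D * (2 ^ (m + 1) * jap ξ ^ (-m) * jap η ^ (m + 1)) := by
        rw [Real.rpow_add_one hb.ne']
        ring

lemma abs_sub_le_of_symbol_bounds (hσ0 : 0 ≤ σ) (hσ1 : σ ≤ 1) (hσm : σ ≤ m) (hC : 0 ≤ C)
    (hD : 0 ≤ D) (hGd : Differentiable ℝ G) (hG : ∀ x, |G x| ≤ C * jap x ^ (σ - m))
    (hG' : ∀ x, ‖fderiv ℝ G x‖ ≤ D * jap x ^ (σ - m - 1)) (ξ η : E d) :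
    |G (ξ + η) - G ξ| ≤ (C + D) * (2 ^ (m + 1) * jap ξ ^ (-m) * jap η ^ (m + 1)) := by
  have := jap_pos ξ
  have := jap_pos η
  rcases le_total (jap ξ) (jap η) with h | h
  · calc |G (ξ + η) - G ξ| ≤ C * (2 ^ (m + 1) * jap ξ ^ (-m) * jap η ^ m) :=
          abs_sub_le_of_jap_le hσ0 hσm hC hG h
      _ ≤ (C + D) * (2 ^ (m + 1) * jap ξ ^ (-m) * jap η ^ (m + 1)) := by
          gcongr
          · linarith
          · exact one_le_jap η
          · linarith
  · calc |G (ξ + η) - G ξ| ≤ D * (2 ^ (m + 1) * jap ξ ^ (-m) * jap η ^ (m + 1)) :=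
          abs_sub_le_of_jap_ge hσ0 hσ1 hσm hD hGd hG' h
      _ ≤ (C + D) * (2 ^ (m + 1) * jap ξ ^ (-m) * jap η ^ (m + 1)) := by
          gcongr
          linarith

end DifferenceEstimate

/-- Derivative bounds for the phase difference:
`|∂_ξ^β (⟨ξ+η⟩^σ − ⟨ξ⟩^σ)| ≤ C ⟨ξ⟩^{−|β|} ⟨η⟩^{2|β|}` for `|β| ≥ 1`. -/
theorem stmt_16 (σ : ℝ) (hσ0 : 0 < σ) (hσ1 : σ < 1) (d : ℕ) (β : Fin d → ℕ)
    (hβ : 1 ≤ ∑ i, β i) :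
    ∃ C : ℝ, 0 < C ∧
      ∀ ξ η : E d,
        ‖mpder β (fun ξ' => jap (ξ' + η) ^ σ - jap ξ' ^ σ) ξ‖
          ≤ C * jap ξ ^ (-(∑ i, (β i : ℝ))) * jap η ^ (2 * ∑ i, (β i : ℝ)) := by
  have hg : IsBracketSymbol σ fun ξ : E d => jap ξ ^ σ := .rpow le_rfl
  obtain ⟨C, hC, hbound⟩ := (hg.mpder β).exists_bound
  obtain ⟨D, hD, hbound'⟩ := (hg.mpder β).exists_norm_fderiv_bound
  have hm : 1 ≤ ∑ i, (β i : ℝ) := by exact_mod_cast hβ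
  set m := ∑ i, (β i : ℝ)
  refine ⟨(C + D) * 2 ^ (m + 1), by positivity, fun ξ η => ?_⟩
  rw [mpder_comm (S := {f | ∃ s, IsBracketSymbol s f}) (T := fun f ξ' => f (ξ' + η) - f ξ')
    (fun i _ ⟨s, hf⟩ => ⟨s - 1, hf.pder i⟩)
    (fun i _ ⟨_, hf⟩ => pder_translate_sub i η hf.differentiable) β ⟨σ, hg⟩, Real.norm_eq_abs]
  calc _ ≤ (C + D) * (2 ^ (m + 1) * jap ξ ^ (-m) * jap η ^ (m + 1)) :=
        abs_sub_le_of_symbol_bounds hσ0.le hσ1.le (by linarith) hC.le hD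
          (hg.mpder β).differentiable hbound hbound' ξ η
    _ ≤ (C + D) * 2 ^ (m + 1) * jap ξ ^ (-m) * jap η ^ (2 * m) := by
        have := jap_pos ξ
        rw [← mul_assoc, ← mul_assoc]
        gcongr
        · exact one_le_jap η
        · linarith
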